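/- arXiv:1507.04189 — 3 statements merged into one kernel-verified Lean document; each statement's English description precedes it below -/
import Mathlib

section
/- Suppose 1 - F is regularly varying at infinity with index -1/γ₁ and 1 - G is regularly varying at infinity with index -1/γ₂, where 0 < γ₁ < γ₂. Then the integral ∫_0^∞ dF(x)/(1 - G(x)) is finite, where F and G are continuous distribution functions of positive random variables with 1-G(x) > 0 for all x. -/
/-!
Write `F̄ = 1 - F`, `Ḡ = 1 - G` and pick `δ ∈ (γ₁/γ₂, 1)`. The ratio `F̄^δ / Ḡ` is regularly varying
of index `-δ/γ₁ + 1/γ₂ < 0`, so it eventually decreases along `t ↦ 2t` and is therefore bounded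
near infinity; hence `1/Ḡ ≤ M F̄^{-δ}` near infinity, and `1/Ḡ` is bounded elsewhere by
monotonicity. As `F` is continuous, `F̄` is at least uniformly distributed under `μ`:
`μ {F̄ < u} ≤ u`. By the layer-cake formula `∫ F̄^{-δ} dμ` is then dominated by
`1 + ∫₁^∞ s^{-1/δ} ds`, which is finite because `δ < 1`.
-/

open MeasureTheory Filter Set Topology ProbabilityTheory

theorem measure_one_sub_cdf_lt_le (μ : Measure ℝ) [IsProbabilityMeasure μ]
    (hμ : Continuous (cdf μ)) (u : ℝ) :
    μ {x | 1 - cdf μ x < u} ≤ ENNReal.ofReal u := by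
  rcases le_or_gt u 0 with hu | hu
  · have : {x | 1 - cdf μ x < u} = ∅ :=
      eq_empty_of_forall_notMem fun x hx => by linarith [cdf_le_one μ x, hx.out]
    simp [this]
  rcases le_or_gt 1 u with hu1 | hu1
  · exact prob_le_one.trans (ENNReal.one_le_ofReal.2 hu1)
  obtain ⟨a, ha⟩ := (tendsto_cdf_atBot μ).eventually_lt_const (sub_pos.2 hu1) |>.exists
  obtain ⟨b, hb⟩ := (tendsto_cdf_atTop μ).eventually_const_lt (sub_lt_self 1 hu) |>.exists
  obtain ⟨x₀, hx₀⟩ := intermediate_value_univ a b hμ ⟨ha.le, hb.le⟩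
  have hsub : {x | 1 - cdf μ x < u} ⊆ Ioi x₀ := fun x hx => by
    by_contra hle
    have := monotone_cdf μ (not_lt.1 hle)
    linarith [hx.out]
  calc μ {x | 1 - cdf μ x < u} ≤ μ (Iic x₀)ᶜ := by rw [compl_Iic]; exact measure_mono hsub
    _ = ENNReal.ofReal u := by
      rw [prob_compl_eq_one_sub measurableSet_Iic, ← ofReal_cdf, hx₀,
        ← ENNReal.ofReal_one, ← ENNReal.ofReal_sub _ (sub_pos.2 hu1).le, sub_sub_cancel]

theorem integrable_rpow_neg_of_measure_lt_le {α : Type*} [MeasurableSpace α] {μ : Measure α}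
    [IsFiniteMeasure μ] {g : α → ℝ} (hg : Measurable g) (hg0 : ∀ x, 0 < g x)
    (hμg : ∀ u, μ {x | g x < u} ≤ ENNReal.ofReal u) {δ : ℝ} (hδ0 : 0 < δ) (hδ1 : δ < 1) :
    Integrable (fun x => g x ^ (-δ)) μ := by
  have hmeas : Measurable fun x => g x ^ (-δ) := hg.pow_const _
  refine ⟨hmeas.aestronglyMeasurable, ?_⟩
  have hnn : ∀ x, 0 ≤ g x ^ (-δ) := fun x => (Real.rpow_pos_of_pos (hg0 x) _).le
  rw [hasFiniteIntegral_iff_ofReal (ae_of_all _ hnn),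
    lintegral_eq_lintegral_meas_lt μ (ae_of_all _ hnn) hmeas.aemeasurable,
    ← Ioc_union_Ioi_eq_Ioi zero_le_one, lintegral_union measurableSet_Ioi Ioc_disjoint_Ioi_same]
  have htail : ∀ s > (1 : ℝ), μ {x | s < g x ^ (-δ)} ≤ ENNReal.ofReal (s ^ (-δ)⁻¹) := by
    intro s hs
    have hset : {x | s < g x ^ (-δ)} = {x | g x < s ^ (-δ)⁻¹} := by
      ext x
      exact (Real.lt_rpow_inv_iff_of_neg (hg0 x) (by linarith) (by linarith)).symm
    exact hset ▸ hμg _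
  refine ENNReal.add_lt_top.2 ⟨?_, ?_⟩
  · calc ∫⁻ s in Ioc 0 1, μ {x | s < g x ^ (-δ)} ≤ ∫⁻ _ in Ioc (0 : ℝ) 1, μ univ :=
          lintegral_mono fun s => measure_mono (subset_univ _)
      _ < ⊤ := by simp [measure_lt_top]
  · have hint : IntegrableOn (fun s : ℝ => s ^ (-δ)⁻¹) (Ioi 1) :=
      integrableOn_Ioi_rpow_of_lt
        (by rw [inv_neg, neg_lt_neg_iff]; exact one_lt_inv_iff₀.2 ⟨hδ0, hδ1⟩) one_pos
    calc ∫⁻ s in Ioi 1, μ {x | s < g x ^ (-δ)} ≤ ∫⁻ s in Ioi 1, ENNReal.ofReal (s ^ (-δ)⁻¹) :=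
          setLIntegral_mono' measurableSet_Ioi htail
      _ < ⊤ := (hasFiniteIntegral_iff_ofReal ((ae_restrict_iff' measurableSet_Ioi).2
          (ae_of_all _ fun s hs => Real.rpow_nonneg (zero_le_one.trans hs.out.le) _))).1 hint.2

theorem one_sub_cdf_pos_of_frequently_ne_zero (μ : Measure ℝ)
    (h : ∃ᶠ t in atTop, 1 - cdf μ t ≠ 0) (t : ℝ) : 0 < 1 - cdf μ t := by
  obtain ⟨s, hts, hs⟩ := (frequently_atTop.1 h) t
  have hs1 : cdf μ s < 1 := (cdf_le_one μ s).lt_of_ne fun h1 => hs (by rw [h1, sub_self])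
  linarith [monotone_cdf μ hts]

theorem integrable_of_monotone_of_eventually_le {μ : Measure ℝ} [IsFiniteMeasure μ]
    {u v : ℝ → ℝ} (hu : Monotone u) (hu0 : ∀ t, 0 ≤ u t) (hv : Integrable v μ)
    (huv : ∀ᶠ t in atTop, u t ≤ v t) : Integrable u μ := by
  obtain ⟨T, hT⟩ := eventually_atTop.1 huv
  refine ((integrable_const (u T)).add hv.abs).mono' hu.measurable.aestronglyMeasurable
    (ae_of_all _ fun t => ?_)
  rw [Real.norm_of_nonneg (hu0 t)]
  change u t ≤ u T + |v t|
  rcases le_total t T with ht | ht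
  · linarith [hu ht, abs_nonneg (v t)]
  · linarith [hT t ht, le_abs_self (v t), hu0 T]

theorem isBoundedUnder_le_atTop_of_eventually_le_comp_mul_two {f : ℝ → ℝ} (hf : Continuous f)
    (hf2 : ∀ᶠ t in atTop, f (t * 2) ≤ f t) : IsBoundedUnder (· ≤ ·) atTop f := by
  obtain ⟨T, hT⟩ := eventually_atTop.1 (hf2.and (eventually_ge_atTop 1))
  have hT1 : 1 ≤ T := (hT T le_rfl).2
  have hpow : ∀ n : ℕ, ∀ s ≥ T, f (s * 2 ^ n) ≤ f s := by
    intro n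
    induction n with
    | zero => simp
    | succ n ih =>
      intro s hs
      have hsn : T ≤ s * 2 ^ n :=
        hs.trans (le_mul_of_one_le_right (by linarith) (one_le_pow₀ one_le_two))
      rw [pow_succ, ← mul_assoc]
      exact (hT _ hsn).1.trans (ih s hs)
  obtain ⟨M, hM⟩ := (isCompact_Icc (a := T) (b := T * 2)).bddAbove_image hf.continuousOn
  refine ⟨M, eventually_map.2 <| (eventually_ge_atTop T).mono fun t ht => ?_⟩
  obtain ⟨n, hn, hn1⟩ := exists_nat_pow_near ((one_le_div (by linarith)).2 ht) one_lt_two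
  have hpos : (0 : ℝ) < 2 ^ n := by positivity
  have hs : T ≤ t / 2 ^ n := by
    rw [le_div_iff₀ hpos]; rwa [le_div_iff₀ (by linarith), mul_comm] at hn
  have hs2 : t / 2 ^ n ≤ T * 2 := by
    rw [div_le_iff₀ hpos]
    rw [div_lt_iff₀ (by linarith), pow_succ] at hn1
    linarith
  calc f t = f (t / 2 ^ n * 2 ^ n) := by rw [div_mul_cancel₀ _ hpos.ne']
    _ ≤ f (t / 2 ^ n) := hpow n _ hs
    _ ≤ M := hM ⟨_, ⟨hs, hs2⟩, rfl⟩

def IsRegularlyVarying (f : ℝ → ℝ) (ρ : ℝ) : Prop :=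
  ∀ x > (0 : ℝ), Tendsto (fun t => f (t * x) / f t) atTop (𝓝 (x ^ ρ))

namespace IsRegularlyVarying

variable {f g : ℝ → ℝ} {ρ σ : ℝ}

theorem frequently_ne_zero (hf : IsRegularlyVarying f ρ) : ∃ᶠ t in atTop, f t ≠ 0 := by
  intro h
  have hzero : Tendsto (fun t => f (t * 2) / f t) atTop (𝓝 0) :=
    tendsto_const_nhds.congr' (h.mono fun t ht => by simp [not_not.1 ht])
  exact (Real.rpow_pos_of_pos two_pos ρ).ne' (tendsto_nhds_unique (hf 2 two_pos) hzero)

theorem rpow (hf : IsRegularlyVarying f ρ) (hf0 : ∀ t, 0 ≤ f t) {δ : ℝ} (hδ : 0 ≤ δ) :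
    IsRegularlyVarying (fun t => f t ^ δ) (ρ * δ) := by
  intro x hx
  rw [Real.rpow_mul hx.le]
  exact ((hf x hx).rpow_const (Or.inr hδ)).congr fun t => Real.div_rpow (hf0 _) (hf0 t) δ

theorem div (hf : IsRegularlyVarying f ρ) (hg : IsRegularlyVarying g σ) :
    IsRegularlyVarying (fun t => f t / g t) (ρ - σ) := by
  intro x hx
  rw [Real.rpow_sub hx]
  exact ((hf x hx).div (hg x hx) (Real.rpow_pos_of_pos hx σ).ne').congr fun t =>
    div_div_div_comm _ _ _ _

theorem eventually_le_comp_mul_two (hf : IsRegularlyVarying f ρ) (hρ : ρ < 0)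
    (hf0 : ∀ t, 0 < f t) : ∀ᶠ t in atTop, f (t * 2) ≤ f t := by
  filter_upwards [(hf 2 two_pos).eventually_lt_const
    (Real.rpow_lt_one_of_one_lt_of_neg one_lt_two hρ)] with t ht
  exact ((div_lt_one (hf0 t)).1 ht).le

theorem isBoundedUnder_le_atTop (hf : IsRegularlyVarying f ρ) (hρ : ρ < 0)
    (hf0 : ∀ t, 0 < f t) (hcont : Continuous f) : IsBoundedUnder (· ≤ ·) atTop f :=
  isBoundedUnder_le_atTop_of_eventually_le_comp_mul_two hcont
    (hf.eventually_le_comp_mul_two hρ hf0)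

theorem exists_inv_le_mul_rpow_neg (hf : IsRegularlyVarying f ρ) (hg : IsRegularlyVarying g σ)
    (hf0 : ∀ t, 0 < f t) (hg0 : ∀ t, 0 < g t) (hfc : Continuous f) (hgc : Continuous g)
    {δ : ℝ} (hδ : 0 ≤ δ) (hidx : ρ * δ - σ < 0) :
    ∃ M, ∀ᶠ t in atTop, (g t)⁻¹ ≤ M * f t ^ (-δ) := by
  obtain ⟨M, hM⟩ := ((hf.rpow (fun t => (hf0 t).le) hδ).div hg).isBoundedUnder_le_atTop hidx
    (fun t => div_pos (Real.rpow_pos_of_pos (hf0 t) δ) (hg0 t))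
    (((hfc.rpow_const fun _ => Or.inr hδ).div hgc) fun t => (hg0 t).ne')
  refine ⟨M, (eventually_map.1 hM).mono fun t ht => ?_⟩
  calc (g t)⁻¹ = f t ^ δ / g t * f t ^ (-δ) := by
        rw [Real.rpow_neg (hf0 t).le, div_mul_eq_mul_div,
          mul_inv_cancel₀ (Real.rpow_pos_of_pos (hf0 t) δ).ne', one_div]
    _ ≤ M * f t ^ (-δ) := mul_le_mul_of_nonneg_right ht (Real.rpow_nonneg (hf0 t).le _)

end IsRegularlyVarying

theorem integrable_inv_Gbar_general
    (μ ν : Measure ℝ) [IsProbabilityMeasure μ] [IsProbabilityMeasure ν]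
    (F G : ℝ → ℝ)
    (hF : F = fun t => (μ (Iic t)).toReal)
    (hG : G = fun t => (ν (Iic t)).toReal)
    (hFcont : Continuous F) (hGcont : Continuous G)
    (hGbar_pos : ∀ x, G x < 1)
    (γ₁ γ₂ : ℝ) (hγ₁ : 0 < γ₁) (hγ₁₂ : γ₁ < γ₂)
    (hFrv : ∀ x > (0 : ℝ), Tendsto (fun t => (1 - F (t * x)) / (1 - F t))
      atTop (nhds (x ^ (-1 / γ₁))))
    (hGrv : ∀ x > (0 : ℝ), Tendsto (fun t => (1 - G (t * x)) / (1 - G t))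
      atTop (nhds (x ^ (-1 / γ₂)))) :
    Integrable (fun x => (1 - G x)⁻¹) μ := by
  obtain rfl : F = cdf μ := by rw [hF]; ext t; rw [cdf_eq_real]; rfl
  obtain rfl : G = cdf ν := by rw [hG]; ext t; rw [cdf_eq_real]; rfl
  replace hFrv : IsRegularlyVarying (1 - cdf μ ·) (-1 / γ₁) := hFrv
  replace hGrv : IsRegularlyVarying (1 - cdf ν ·) (-1 / γ₂) := hGrv
  have hFbar : ∀ t, 0 < 1 - cdf μ t :=
    one_sub_cdf_pos_of_frequently_ne_zero μ hFrv.frequently_ne_zero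
  have hGbar : ∀ t, 0 < 1 - cdf ν t := fun t => sub_pos.2 (hGbar_pos t)
  have hγ₂ : 0 < γ₂ := hγ₁.trans hγ₁₂
  obtain ⟨δ, hδ₁, hδ₂⟩ := exists_between ((div_lt_one hγ₂).2 hγ₁₂)
  have hδ₀ : 0 < δ := (div_pos hγ₁ hγ₂).trans hδ₁
  have hidx : -1 / γ₁ * δ - -1 / γ₂ < 0 := by
    have : γ₁ < δ * γ₂ := (div_lt_iff₀ hγ₂).1 hδ₁
    rw [show -1 / γ₁ * δ - -1 / γ₂ = (γ₁ - δ * γ₂) / (γ₁ * γ₂) by field_simp; ring]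
    exact div_neg_of_neg_of_pos (by linarith) (by positivity)
  obtain ⟨M, hM⟩ := hFrv.exists_inv_le_mul_rpow_neg hGrv hFbar hGbar
    (continuous_const.sub hFcont) (continuous_const.sub hGcont) hδ₀.le hidx
  have hint : Integrable (fun t => (1 - cdf μ t) ^ (-δ)) μ :=
    integrable_rpow_neg_of_measure_lt_le (by fun_prop) hFbar
      (measure_one_sub_cdf_lt_le μ hFcont) hδ₀ hδ₂
  exact integrable_of_monotone_of_eventually_le
    (fun a b hab => inv_anti₀ (hGbar b) (by linarith [monotone_cdf ν hab]))
    (fun t => (inv_pos.2 (hGbar t)).le) (hint.const_mul M) hM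

theorem integrable_inv_Gbar
    (μ ν : Measure ℝ) [IsProbabilityMeasure μ] [IsProbabilityMeasure ν]
    (F G : ℝ → ℝ)
    (hF : F = fun t => (μ (Iic t)).toReal)
    (hG : G = fun t => (ν (Iic t)).toReal)
    (hFcont : Continuous F) (hGcont : Continuous G)
    (hμpos : μ (Iic 0) = 0) (hνpos : ν (Iic 0) = 0)
    (hGbar_pos : ∀ x, G x < 1)
    (γ₁ γ₂ : ℝ) (hγ₁ : 0 < γ₁) (hγ₁₂ : γ₁ < γ₂)
    (hFrv : ∀ x > (0 : ℝ), Tendsto (fun t => (1 - F (t * x)) / (1 - F t))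
      atTop (nhds (x ^ (-1 / γ₁))))
    (hGrv : ∀ x > (0 : ℝ), Tendsto (fun t => (1 - G (t * x)) / (1 - G t))
      atTop (nhds (x ^ (-1 / γ₂)))) :
    Integrable (fun x => (1 - G x)⁻¹) μ :=
  integrable_inv_Gbar_general μ ν F G hF hG hFcont hGcont hGbar_pos γ₁ γ₂ hγ₁ hγ₁₂ hFrv hGrv
end

section
/- Let (a_n), (b_n) be sequences of real random variables with a_n → γ in probability (γ real), with deterministic d_n → ∞ and √(v_n)/log d_n → ∞ for positive reals v_n, and suppose √(v_n)(a_n - γ) converges in distribution to N(μ, σ²). Then (√(v_n)/log d_n)(d_n^{a_n - γ} - 1) also converges in distribution to N(μ, σ²). -/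
open MeasureTheory ProbabilityTheory Filter BoundedContinuousFunction

/-- A continuous bump: equals 1 on `{|x| ≥ M}`, vanishes on `{|x| ≤ M - 1}`, in `[0,1]`. -/
noncomputable def bumpBCF (M : ℝ) : BoundedContinuousFunction ℝ ℝ :=
  BoundedContinuousFunction.ofNormedAddCommGroup
    (fun x => min 1 (max 0 (|x| - (M - 1))))
    (by fun_prop)
    1
    (fun x => by
      have h1 : (0:ℝ) ≤ min 1 (max 0 (|x| - (M - 1))) :=
        le_min zero_le_one (le_max_left _ _)
      have h2 := min_le_left (1:ℝ) (max 0 (|x| - (M - 1)))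
      rw [Real.norm_eq_abs, abs_le]
      constructor <;> linarith)

lemma bumpBCF_apply (M x : ℝ) : bumpBCF M x = min 1 (max 0 (|x| - (M - 1))) := rfl

lemma bumpBCF_nonneg (M x : ℝ) : 0 ≤ bumpBCF M x :=
  le_min zero_le_one (le_max_left _ _)

lemma bumpBCF_le_one (M x : ℝ) : bumpBCF M x ≤ 1 := min_le_left _ _

lemma bumpBCF_one (M x : ℝ) (hx : M ≤ |x|) : bumpBCF M x = 1 := by
  rw [bumpBCF_apply]
  have : (1:ℝ) ≤ |x| - (M - 1) := by linarith
  rw [max_eq_right (by linarith), min_eq_left this]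

lemma bumpBCF_zero (M x : ℝ) (hx : |x| < M - 1) : bumpBCF M x = 0 := by
  rw [bumpBCF_apply]
  rw [max_eq_left (by linarith), min_eq_right zero_le_one]

/-- Probability tails go to zero. -/
lemma tail_tendsto (μ : Measure ℝ) [IsProbabilityMeasure μ] :
    Tendsto (fun M : ℕ => (μ {x : ℝ | (M : ℝ) ≤ |x|}).toReal) atTop (nhds 0) := by
  have hmeas : ∀ M : ℕ, NullMeasurableSet {x : ℝ | (M : ℝ) ≤ |x|} μ := fun M =>
    ((isClosed_le continuous_const continuous_abs).measurableSet).nullMeasurableSet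
  have hanti : Antitone (fun M : ℕ => {x : ℝ | (M : ℝ) ≤ |x|}) := by
    intro i j hij x hx
    simp only [Set.mem_setOf_eq] at hx ⊢
    exact le_trans (by exact_mod_cast hij : (i:ℝ) ≤ (j:ℝ)) hx
  have h := tendsto_measure_iInter_atTop (μ := μ) hmeas hanti
    ⟨0, measure_ne_top μ _⟩
  have hempty : (⋂ M : ℕ, {x : ℝ | (M : ℝ) ≤ |x|}) = ∅ := by
    ext x
    simp only [Set.mem_iInter, Set.mem_setOf_eq, Set.mem_empty_iff_false, iff_false, not_forall]
    obtain ⟨N, hN⟩ := exists_nat_gt |x|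
    exact ⟨N, not_le.2 hN⟩
  rw [hempty] at h
  simp only [measure_empty] at h
  have := (ENNReal.tendsto_toReal (by norm_num : (0:ENNReal) ≠ ⊤)).comp h
  simpa [Function.comp_def] using this

/-- Bounded measurable functions are integrable on a probability space. -/
lemma integrable_of_bdd {Ω : Type*} [MeasureSpace Ω] [IsProbabilityMeasure (ℙ : Measure Ω)]
    {g : Ω → ℝ} (hg : Measurable g) {C : ℝ} (h : ∀ ω, |g ω| ≤ C) :
    Integrable g ℙ := by
  refine ⟨hg.aestronglyMeasurable, ?_⟩
  apply HasFiniteIntegral.of_bounded (C := C)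
  filter_upwards with ω
  simpa [Real.norm_eq_abs] using h ω

theorem quantile_delta_method
    {Ω : Type*} [MeasureSpace Ω] [IsProbabilityMeasure (ℙ : Measure Ω)]
    (a : ℕ → Ω → ℝ) (hmeas : ∀ n, Measurable (a n))
    (γ : ℝ)
    (haP : ∀ ε > (0 : ℝ),
      Tendsto (fun n => (ℙ {ω | ε ≤ |a n ω - γ|}).toReal) atTop (nhds 0))
    (d : ℕ → ℝ) (hd : Tendsto d atTop atTop)
    (v : ℕ → ℝ) (hv : ∀ n, 0 < v n)
    (hvd : Tendsto (fun n => Real.sqrt (v n) / Real.log (d n)) atTop atTop)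
    (m : ℝ) (s2 : NNReal)
    (hclt : ∀ f : BoundedContinuousFunction ℝ ℝ,
      Tendsto (fun n => ∫ ω, f (Real.sqrt (v n) * (a n ω - γ)) ∂ℙ)
        atTop (nhds (∫ x, f x ∂(gaussianReal m s2)))) :
    ∀ f : BoundedContinuousFunction ℝ ℝ,
      Tendsto (fun n => ∫ ω,
          f ((Real.sqrt (v n) / Real.log (d n)) *
            (Real.exp ((a n ω - γ) * Real.log (d n)) - 1)) ∂ℙ)
        atTop (nhds (∫ x, f x ∂(gaussianReal m s2))) := by
  classical
  set μ := gaussianReal m s2 with hμ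
  set X : ℕ → Ω → ℝ := fun n ω => Real.sqrt (v n) * (a n ω - γ) with hXdef
  set Z : ℕ → Ω → ℝ := fun n ω =>
    (Real.sqrt (v n) / Real.log (d n)) *
      (Real.exp ((a n ω - γ) * Real.log (d n)) - 1) with hZdef
  have hXmeas : ∀ n, Measurable (X n) := fun n =>
    measurable_const.mul ((hmeas n).sub measurable_const)
  have hZmeas : ∀ n, Measurable (Z n) := fun n =>
    measurable_const.mul
      ((Real.measurable_exp.comp (((hmeas n).sub measurable_const).mul measurable_const)).sub
        measurable_const)
  -- Tightness of X n
  have tight : ∀ ε > (0:ℝ), ∃ M : ℝ, 1 ≤ M ∧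
      ∀ᶠ n in atTop, (ℙ {ω | M < |X n ω|}).toReal < ε := by
    intro ε hε
    -- choose a tail cutoff for the Gaussian
    have h1 := (tail_tendsto μ).eventually (gt_mem_nhds (half_pos hε))
    obtain ⟨K, hK⟩ := h1.exists
    refine ⟨(K : ℝ) + 2, by have : (0:ℝ) ≤ (K:ℝ) := Nat.cast_nonneg K; linarith, ?_⟩
    -- ∫ bump dμ < ε
    have hintle : ∫ x, bumpBCF ((K : ℝ) + 2) x ∂μ ≤ (μ {x : ℝ | (K : ℝ) ≤ |x|}).toReal := by
      have hS : MeasurableSet {x : ℝ | (K : ℝ) ≤ |x|} :=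
        (isClosed_le continuous_const continuous_abs).measurableSet
      have hmono : ∀ x, bumpBCF ((K : ℝ) + 2) x ≤
          Set.indicator {x : ℝ | (K : ℝ) ≤ |x|} (fun _ => (1:ℝ)) x := by
        intro x
        by_cases hx : (K : ℝ) ≤ |x|
        · rw [Set.indicator_of_mem (show x ∈ {x : ℝ | (K : ℝ) ≤ |x|} from hx)]
          exact bumpBCF_le_one _ _
        · rw [Set.indicator_of_notMem (show x ∉ {x : ℝ | (K : ℝ) ≤ |x|} from hx)]
          have : |x| < (K : ℝ) + 2 - 1 := by push_neg at hx; linarith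
          rw [bumpBCF_zero _ _ this]
      calc ∫ x, bumpBCF ((K : ℝ) + 2) x ∂μ
          ≤ ∫ x, Set.indicator {x : ℝ | (K : ℝ) ≤ |x|} (fun _ => (1:ℝ)) x ∂μ :=
            integral_mono ((bumpBCF ((K : ℝ) + 2)).integrable μ)
              ((integrable_const (1:ℝ)).indicator hS) hmono
        _ = (μ {x : ℝ | (K : ℝ) ≤ |x|}).toReal := by
            rw [integral_indicator_const _ hS]; simp; rfl
    have hintlt : ∫ x, bumpBCF ((K : ℝ) + 2) x ∂μ < ε :=
      lt_of_le_of_lt hintle (lt_trans hK (half_lt_self hε))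
    have hev := (hclt (bumpBCF ((K : ℝ) + 2))).eventually (gt_mem_nhds hintlt)
    filter_upwards [hev] with n hn
    -- ℙ {M < |X n|} ≤ ∫ bump (X n)
    have hS : MeasurableSet {ω | (K : ℝ) + 2 < |X n ω|} :=
      measurableSet_lt measurable_const (hXmeas n).abs
    have hle : (ℙ {ω | (K : ℝ) + 2 < |X n ω|}).toReal ≤
        ∫ ω, bumpBCF ((K : ℝ) + 2) (X n ω) ∂ℙ := by
      have hmono : ∀ ω, Set.indicator {ω | (K : ℝ) + 2 < |X n ω|} (fun _ => (1:ℝ)) ω ≤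
          bumpBCF ((K : ℝ) + 2) (X n ω) := by
        intro ω
        by_cases hω : (K : ℝ) + 2 < |X n ω|
        · rw [Set.indicator_of_mem (show ω ∈ {ω | (K : ℝ) + 2 < |X n ω|} from hω),
            bumpBCF_one _ _ (le_of_lt hω)]
        · rw [Set.indicator_of_notMem (show ω ∉ {ω | (K : ℝ) + 2 < |X n ω|} from hω)]
          exact bumpBCF_nonneg _ _
      have hInt2 : Integrable (fun ω => bumpBCF ((K : ℝ) + 2) (X n ω)) ℙ :=
        integrable_of_bdd ((bumpBCF ((K : ℝ) + 2)).continuous.measurable.comp (hXmeas n))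
          (C := 1) (fun ω => abs_le.2 ⟨by linarith [bumpBCF_nonneg ((K : ℝ) + 2) (X n ω)],
            bumpBCF_le_one _ _⟩)
      calc (ℙ {ω | (K : ℝ) + 2 < |X n ω|}).toReal
          = ∫ ω, Set.indicator {ω | (K : ℝ) + 2 < |X n ω|} (fun _ => (1:ℝ)) ω ∂ℙ := by
            rw [integral_indicator_const _ hS]; simp; rfl
        _ ≤ ∫ ω, bumpBCF ((K : ℝ) + 2) (X n ω) ∂ℙ :=
            integral_mono ((integrable_const (1:ℝ)).indicator hS) hInt2 hmono
    exact lt_of_le_of_lt hle hn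
  -- Deterministic approximation: on {|X n| ≤ M}, |Z n - X n| ≤ δ eventually.
  have key : ∀ δ > (0:ℝ), ∀ M : ℝ, 1 ≤ M →
      ∀ᶠ n in atTop, ∀ ω, |X n ω| ≤ M → |Z n ω - X n ω| ≤ δ := by
    intro δ hδ M hM
    have hM0 : (0:ℝ) < M := lt_of_lt_of_le one_pos hM
    have hlogpos : ∀ᶠ n in atTop, 0 < Real.log (d n) :=
      (Real.tendsto_log_atTop.comp hd).eventually_gt_atTop 0
    have hc0 : Tendsto (fun n => Real.log (d n) / Real.sqrt (v n)) atTop (nhds 0) := by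
      have h := hvd.inv_tendsto_atTop
      have heq : (fun n => Real.sqrt (v n) / Real.log (d n))⁻¹ =
          fun n => Real.log (d n) / Real.sqrt (v n) := by
        funext n; simp [Pi.inv_apply, inv_div]
      rwa [heq] at h
    have hsmall : ∀ᶠ n in atTop,
        Real.log (d n) / Real.sqrt (v n) < min (δ / M ^ 2) (1 / M) :=
      hc0.eventually (gt_mem_nhds (lt_min (by positivity) (by positivity)))
    filter_upwards [hlogpos, hsmall] with n hlog hsm ω hω
    have hsv : 0 < Real.sqrt (v n) := Real.sqrt_pos.2 (hv n)
    set t := Real.log (d n) with ht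
    set sv := Real.sqrt (v n) with hsvdef
    set c := t / sv with hc
    have hcpos : 0 < c := div_pos hlog hsv
    have hXval : X n ω = sv * (a n ω - γ) := rfl
    set x := X n ω with hx
    -- rewrite Z - X
    have hrw : Z n ω - x = (sv / t) * (Real.exp (c * x) - 1 - c * x) := by
      have h1 : (a n ω - γ) * t = c * x := by
        rw [hXval, hc]; field_simp
      have h2 : Z n ω = (sv / t) * (Real.exp (c * x) - 1) := by
        rw [hZdef]; simp only; rw [h1]
      rw [h2]
      have h3 : (sv / t) * (c * x) = x := by
        rw [hc]; field_simp
      ring_nf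
      ring_nf at h3
      linarith [h3]
    have hcx : |c * x| ≤ 1 := by
      have h1 : |c * x| = c * |x| := by rw [abs_mul, abs_of_pos hcpos]
      rw [h1]
      have h2 : c * |x| ≤ c * M := by
        apply mul_le_mul_of_nonneg_left hω (le_of_lt hcpos)
      have h3 : c < 1 / M := lt_of_lt_of_le hsm (min_le_right _ _)
      have h4 : c * M ≤ (1 / M) * M := by
        apply mul_le_mul_of_nonneg_right (le_of_lt h3) (le_of_lt hM0)
      have h5 : (1 / M) * M = 1 := by field_simp
      linarith
    have hexp : |Real.exp (c * x) - 1 - c * x| ≤ (c * x) ^ 2 :=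
      Real.abs_exp_sub_one_sub_id_le hcx
    have hbound : |Z n ω - x| ≤ c * M ^ 2 := by
      rw [hrw, abs_mul]
      have h1 : |sv / t| = sv / t := abs_of_pos (div_pos hsv hlog)
      rw [h1]
      have h2 : (c * x) ^ 2 ≤ (c * M) ^ 2 := by
        have := abs_le.1 hcx
        have h3 : |c * x| ≤ c * M := by
          rw [abs_mul, abs_of_pos hcpos]
          exact mul_le_mul_of_nonneg_left hω (le_of_lt hcpos)
        calc (c * x) ^ 2 = |c * x| ^ 2 := (sq_abs _).symm
          _ ≤ (c * M) ^ 2 := by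
              apply pow_le_pow_left₀ (abs_nonneg _) h3
      have h4 : (sv / t) * |Real.exp (c * x) - 1 - c * x| ≤ (sv / t) * (c * M) ^ 2 := by
        apply mul_le_mul_of_nonneg_left (le_trans hexp h2) (le_of_lt (div_pos hsv hlog))
      have h5 : (sv / t) * (c * M) ^ 2 = c * M ^ 2 := by
        rw [hc]; field_simp
      linarith
    have h6 : c * M ^ 2 ≤ δ := by
      have h7 : c < δ / M ^ 2 := lt_of_lt_of_le hsm (min_le_left _ _)
      have h8 : c * M ^ 2 ≤ (δ / M ^ 2) * M ^ 2 :=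
        mul_le_mul_of_nonneg_right (le_of_lt h7) (by positivity)
      have h9 : (δ / M ^ 2) * M ^ 2 = δ := by field_simp
      linarith
    exact le_trans hbound h6
  -- Main argument
  intro f
  set L := ∫ x, f x ∂μ with hL
  rw [Metric.tendsto_nhds]
  intro ε hε
  set C := ‖f‖ with hCdef
  have hC : 0 ≤ C := norm_nonneg f
  have hε' : 0 < ε / (3 * (2 * C + 1)) := by positivity
  obtain ⟨M, hM1, hMev⟩ := tight _ hε'
  -- uniform continuity of f on the compact [-(M+1), M+1]
  have huc := (isCompact_Icc (a := -(M+1)) (b := M+1)).uniformContinuousOn_of_continuous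
    f.continuous.continuousOn
  rw [Metric.uniformContinuousOn_iff] at huc
  obtain ⟨δ₀, hδ₀, hδ₀prop⟩ := huc (ε / 3) (by positivity)
  set δ := min (δ₀ / 2) 1 with hδdef
  have hδpos : 0 < δ := lt_min (by positivity) one_pos
  have hδle1 : δ ≤ 1 := min_le_right _ _
  have hδlt : δ < δ₀ := lt_of_le_of_lt (min_le_left _ _) (by linarith)
  have happrox := key δ hδpos M hM1
  have hcltf := (hclt f).eventually (Metric.ball_mem_nhds L (show (0:ℝ) < ε / 3 by positivity))
  filter_upwards [hMev, happrox, hcltf] with n hP hap hcl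
  rw [Real.dist_eq]
  -- integrability
  have hZint : Integrable (fun ω => f (Z n ω)) ℙ :=
    integrable_of_bdd (f.continuous.measurable.comp (hZmeas n)) (C := C)
      (fun ω => by simpa [Real.norm_eq_abs] using f.norm_coe_le_norm (Z n ω))
  have hXint : Integrable (fun ω => f (X n ω)) ℙ :=
    integrable_of_bdd (f.continuous.measurable.comp (hXmeas n)) (C := C)
      (fun ω => by simpa [Real.norm_eq_abs] using f.norm_coe_le_norm (X n ω))
  have hSmeas : MeasurableSet {ω | M < |X n ω|} :=
    measurableSet_lt measurable_const (hXmeas n).abs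
  -- pointwise bound
  have hpt : ∀ ω, |f (Z n ω) - f (X n ω)| ≤
      ε / 3 + Set.indicator {ω | M < |X n ω|} (fun _ => 2 * C) ω := by
    intro ω
    by_cases hω : M < |X n ω|
    · rw [Set.indicator_of_mem (show ω ∈ {ω | M < |X n ω|} from hω)]
      have h1 : |f (Z n ω)| ≤ C := by
        simpa [Real.norm_eq_abs] using f.norm_coe_le_norm (Z n ω)
      have h2 : |f (X n ω)| ≤ C := by
        simpa [Real.norm_eq_abs] using f.norm_coe_le_norm (X n ω)
      have := abs_sub (f (Z n ω)) (f (X n ω))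
      have h3 : |f (Z n ω) - f (X n ω)| ≤ |f (Z n ω)| + |f (X n ω)| := abs_sub _ _
      linarith
    · rw [Set.indicator_of_notMem (show ω ∉ {ω | M < |X n ω|} from hω)]
      push_neg at hω
      have hZX : |Z n ω - X n ω| ≤ δ := hap ω hω
      have hXmem : X n ω ∈ Set.Icc (-(M+1)) (M+1) := by
        have := abs_le.1 hω
        constructor <;> [linarith; linarith]
      have hZmem : Z n ω ∈ Set.Icc (-(M+1)) (M+1) := by
        have h1 : |Z n ω| ≤ |X n ω| + δ := by
          have := abs_sub_abs_le_abs_sub (Z n ω) (X n ω)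
          linarith
        have h2 : |Z n ω| ≤ M + 1 := by linarith
        have := abs_le.1 h2
        constructor <;> [linarith; linarith]
      have hdist : dist (Z n ω) (X n ω) < δ₀ := by
        rw [Real.dist_eq]; linarith
      have := hδ₀prop _ hZmem _ hXmem hdist
      rw [Real.dist_eq] at this
      linarith [this]
  -- integral bound
  have hdiff : |(∫ ω, f (Z n ω) ∂ℙ) - ∫ ω, f (X n ω) ∂ℙ| ≤
      ε / 3 + 2 * C * (ℙ {ω | M < |X n ω|}).toReal := by
    rw [← integral_sub hZint hXint]
    have h1 : |∫ ω, (f (Z n ω) - f (X n ω)) ∂ℙ| ≤ ∫ ω, |f (Z n ω) - f (X n ω)| ∂ℙ := by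
      simpa [Real.norm_eq_abs] using
        norm_integral_le_integral_norm (fun ω => f (Z n ω) - f (X n ω)) (μ := ℙ)
    refine le_trans h1 ?_
    have hIndInt : Integrable
        (fun ω => Set.indicator {ω | M < |X n ω|} (fun _ => 2 * C) ω) ℙ :=
      (integrable_const (2 * C)).indicator hSmeas
    have h2 : ∫ ω, |f (Z n ω) - f (X n ω)| ∂ℙ ≤
        ∫ ω, (ε / 3 + Set.indicator {ω | M < |X n ω|} (fun _ => 2 * C) ω) ∂ℙ := by
      apply integral_mono (hZint.sub hXint).abs ((integrable_const (ε/3)).add hIndInt) hpt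
    refine le_trans h2 ?_
    rw [integral_add (integrable_const (ε/3)) hIndInt, integral_const,
      integral_indicator_const _ hSmeas]
    simp [measure_univ, smul_eq_mul, mul_comm]; exact le_rfl
  -- conclude
  have hclose : |(∫ ω, f (X n ω) ∂ℙ) - L| < ε / 3 := by
    have := hcl
    simp only [Metric.mem_ball, Real.dist_eq] at this
    exact this
  have hPsmall : 2 * C * (ℙ {ω | M < |X n ω|}).toReal < ε / 3 := by
    have h1 : (ℙ {ω | M < |X n ω|}).toReal ≤ ε / (3 * (2 * C + 1)) := le_of_lt hP
    have h2 : 2 * C * (ℙ {ω | M < |X n ω|}).toReal ≤ 2 * C * (ε / (3 * (2 * C + 1))) :=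
      mul_le_mul_of_nonneg_left h1 (by positivity)
    have h3 : 2 * C * (ε / (3 * (2 * C + 1))) < ε / 3 := by
      have heq : 2 * C * (ε / (3 * (2 * C + 1))) = ε * (2 * C) / (3 * (2 * C + 1)) := by ring
      rw [heq, div_lt_div_iff₀ (by positivity) (by norm_num : (0:ℝ) < 3)]
      nlinarith
    linarith
  calc |(∫ ω, f (Z n ω) ∂ℙ) - L|
      ≤ |(∫ ω, f (Z n ω) ∂ℙ) - ∫ ω, f (X n ω) ∂ℙ| + |(∫ ω, f (X n ω) ∂ℙ) - L| :=
        abs_sub_le _ _ _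
    _ ≤ (ε / 3 + 2 * C * (ℙ {ω | M < |X n ω|}).toReal) + ε / 3 := by
        have := le_of_lt hclose
        linarith [hdiff]
    _ < ε := by linarith [hPsmall]
end

section
/- Let ℓ be slowly varying at infinity with the representation ℓ(x) = C(1 + ρ^{-1} g(x) + o(g(x))) as x → ∞, where C > 0, ρ < 0 and g is positive with g(x) → 0. If (t_n) and (x_n) are sequences tending to infinity with x_n/t_n → ∞ and sup_{y ≥ 1} |g(y t_n)/g(t_n) - y^{ρ}| → 0, then ℓ(x_n)/ℓ(t_n) = 1 - ρ^{-1} g(t_n)(1 + o(1)). -/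
open Filter

theorem slowly_varying_ratio_expansion
    (ℓ g : ℝ → ℝ) (C ρ : ℝ) (hC : 0 < C) (hρ : ρ < 0)
    (hgpos : ∀ x, 0 < g x) (hg0 : Tendsto g atTop (nhds 0))
    (hslow : ∀ x > (0 : ℝ), Tendsto (fun t => ℓ (t * x) / ℓ t) atTop (nhds 1))
    (hrep : Tendsto (fun x => (ℓ x / C - 1 - ρ⁻¹ * g x) / g x) atTop (nhds 0))
    (t x : ℕ → ℝ) (ht : Tendsto t atTop atTop) (hx : Tendsto x atTop atTop)
    (hxt : Tendsto (fun n => x n / t n) atTop atTop)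
    (hunif : ∃ ε : ℕ → ℝ, Tendsto ε atTop (nhds 0) ∧
      ∀ n, ∀ y ≥ (1 : ℝ), |g (y * t n) / g (t n) - y ^ ρ| ≤ ε n) :
    ∃ e : ℕ → ℝ, Tendsto e atTop (nhds 0) ∧
      ∀ n, ℓ (x n) / ℓ (t n) = 1 - ρ⁻¹ * g (t n) * (1 + e n) := by
  obtain ⟨ε, hε0, hεb⟩ := hunif
  have hρ0 : ρ ≠ 0 := hρ.ne
  have hρ' : ρ⁻¹ ≠ 0 := inv_ne_zero hρ0
  have hgne : ∀ z, g z ≠ 0 := fun z => (hgpos z).ne'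
  obtain ⟨h, hhdef⟩ : ∃ h : ℝ → ℝ,
      h = fun z => (ℓ z / C - 1 - ρ⁻¹ * g z) / g z := ⟨_, rfl⟩
  rw [← hhdef] at hrep
  -- representation of ℓ
  have hℓ : ∀ z, ℓ z = C * (1 + ρ⁻¹ * g z + h z * g z) := by
    intro z
    have h1 : h z * g z = ℓ z / C - 1 - ρ⁻¹ * g z := by
      rw [hhdef]; exact div_mul_cancel₀ _ (hgne z)
    rw [h1]
    have h2 : (1 + ρ⁻¹ * g z + (ℓ z / C - 1 - ρ⁻¹ * g z)) = ℓ z / C := by ring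
    rw [h2, mul_div_cancel₀ _ hC.ne']
  -- g (x n) / g (t n) → 0
  have hr : Tendsto (fun n => g (x n) / g (t n)) atTop (nhds 0) := by
    have hub : Tendsto (fun n => (x n / t n) ^ ρ + ε n) atTop (nhds 0) := by
      have h1 : Tendsto (fun n => (x n / t n) ^ ρ) atTop (nhds 0) := by
        have := (tendsto_rpow_neg_atTop (y := -ρ) (by linarith)).comp hxt
        simpa [Function.comp_def, neg_neg] using this
      simpa using h1.add hε0
    refine squeeze_zero' ?_ ?_ hub
    · filter_upwards with n
      exact (div_pos (hgpos _) (hgpos _)).le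
    · filter_upwards [hxt.eventually_ge_atTop 1, ht.eventually_gt_atTop 0]
        with n h1 h2
      have key := hεb n (x n / t n) h1
      rw [div_mul_cancel₀ _ h2.ne'] at key
      have := (abs_le.1 key).2
      linarith
  have hhx : Tendsto (fun n => h (x n)) atTop (nhds 0) := hrep.comp hx
  have hht : Tendsto (fun n => h (t n)) atTop (nhds 0) := hrep.comp ht
  have hgt : Tendsto (fun n => g (t n)) atTop (nhds 0) := hg0.comp ht
  have hB1 : Tendsto (fun n => 1 + ρ⁻¹ * g (t n) + h (t n) * g (t n)) atTop
      (nhds 1) := by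
    have : Tendsto (fun n => 1 + ρ⁻¹ * g (t n) + h (t n) * g (t n)) atTop
        (nhds (1 + ρ⁻¹ * 0 + 0 * 0)) :=
      (tendsto_const_nhds.add (tendsto_const_nhds.mul hgt)).add (hht.mul hgt)
    simpa using this
  have hBne : ∀ᶠ n in atTop, 1 + ρ⁻¹ * g (t n) + h (t n) * g (t n) ≠ 0 :=
    hB1.eventually_ne one_ne_zero
  -- key limit : (ℓ(x n)/ℓ(t n) - 1) / g(t n) → -ρ⁻¹
  have key : Tendsto (fun n => (ℓ (x n) / ℓ (t n) - 1) / g (t n)) atTop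
      (nhds (-ρ⁻¹)) := by
    have hF : Tendsto (fun n =>
        (ρ⁻¹ * (g (x n) / g (t n) - 1) + h (x n) * (g (x n) / g (t n)) - h (t n)) /
          (1 + ρ⁻¹ * g (t n) + h (t n) * g (t n)))
        atTop (nhds (-ρ⁻¹)) := by
      have hnum : Tendsto (fun n =>
          ρ⁻¹ * (g (x n) / g (t n) - 1) + h (x n) * (g (x n) / g (t n)) - h (t n))
          atTop (nhds (ρ⁻¹ * (0 - 1) + 0 * 0 - 0)) :=
        ((tendsto_const_nhds.mul (hr.sub tendsto_const_nhds)).add (hhx.mul hr)).sub hht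
      have := hnum.div hB1 one_ne_zero
      simpa [Pi.div_def] using this
    refine hF.congr' ?_
    filter_upwards [hBne] with n hBn
    have hrat : ℓ (x n) / ℓ (t n) =
        (1 + ρ⁻¹ * g (x n) + h (x n) * g (x n)) /
          (1 + ρ⁻¹ * g (t n) + h (t n) * g (t n)) := by
      rw [hℓ (x n), hℓ (t n), mul_div_mul_left _ _ hC.ne']
    have hnum2 : ρ⁻¹ * (g (x n) / g (t n) - 1) + h (x n) * (g (x n) / g (t n)) - h (t n)
        = ((1 + ρ⁻¹ * g (x n) + h (x n) * g (x n)) -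
           (1 + ρ⁻¹ * g (t n) + h (t n) * g (t n))) / g (t n) := by
      field_simp [hgne (t n), hρ0]
      ring
    rw [hnum2, hrat, div_sub_one hBn, div_div, div_div, mul_comm (g (t n))]
  refine ⟨fun n => (1 - ℓ (x n) / ℓ (t n)) / (ρ⁻¹ * g (t n)) - 1, ?_, ?_⟩
  · have heq : ∀ n, (1 - ℓ (x n) / ℓ (t n)) / (ρ⁻¹ * g (t n)) - 1 =
        -((ℓ (x n) / ℓ (t n) - 1) / g (t n)) * ρ - 1 := by
      intro n
      rw [div_eq_mul_inv, mul_inv, inv_inv, div_eq_mul_inv]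
      ring
    have h1 : Tendsto (fun n => -((ℓ (x n) / ℓ (t n) - 1) / g (t n)) * ρ - 1) atTop
        (nhds (-(-ρ⁻¹) * ρ - 1)) := ((key.neg).mul_const ρ).sub tendsto_const_nhds
    have h2 : -(-ρ⁻¹) * ρ - 1 = 0 := by
      rw [neg_neg, inv_mul_cancel₀ hρ0]; ring
    rw [h2] at h1
    exact h1.congr (fun n => (heq n).symm)
  · intro n
    have hne : ρ⁻¹ * g (t n) ≠ 0 := mul_ne_zero hρ' (hgne _)
    have h3 : 1 + ((1 - ℓ (x n) / ℓ (t n)) / (ρ⁻¹ * g (t n)) - 1)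
        = (1 - ℓ (x n) / ℓ (t n)) / (ρ⁻¹ * g (t n)) := by ring
    rw [h3, mul_div_cancel₀ _ hne]
    ring
end
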